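/- arXiv:1802.04985 — 3 statements merged into one kernel-verified Lean document; each statement's English description precedes it below -/
import Mathlib

section
/- The function f(x, y, z_1, ..., z_n) = log(xy - Σᵢ zᵢ²) is concave on the open set {(x, y, z) ∈ ℝ × ℝ × ℝⁿ : x > 0, y > 0, xy - Σᵢ zᵢ² > 0}. -/
open Real Finset

private lemma comb_pos {a b s t : ℝ} (ha : 0 < a) (hb : 0 < b) (hs : 0 ≤ s) (ht : 0 ≤ t)
    (hst : s + t = 1) : 0 < s * a + t * b := by
  rcases hs.eq_or_lt with h | h
  · have ht1 : t = 1 := by linarith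
    simp [← h, ht1, hb]
  · have : 0 ≤ t * b := mul_nonneg ht hb.le
    nlinarith

private lemma core (x₁ y₁ x₂ y₂ P Q w : ℝ) (hx₁ : 0 < x₁) (hy₁ : 0 < y₁) (hx₂ : 0 < x₂)
    (hy₂ : 0 < y₂) (hP : 0 ≤ P) (hQ : 0 ≤ Q) (hw : w ^ 2 ≤ P * Q)
    (h₁ : 0 < x₁ * y₁ - P) (h₂ : 0 < x₂ * y₂ - Q) :
    2 * (Real.sqrt (x₁ * y₁ - P) * Real.sqrt (x₂ * y₂ - Q)) + 2 * w ≤ x₁ * y₂ + x₂ * y₁ := by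
  set u := Real.sqrt (x₁ * y₁ - P) with hu
  set v := Real.sqrt (x₂ * y₂ - Q) with hv
  set e := Real.sqrt P with he
  set f := Real.sqrt Q with hf
  have hu2 : u ^ 2 = x₁ * y₁ - P := Real.sq_sqrt h₁.le
  have hv2 : v ^ 2 = x₂ * y₂ - Q := Real.sq_sqrt h₂.le
  have he2 : e ^ 2 = P := Real.sq_sqrt hP
  have hf2 : f ^ 2 = Q := Real.sq_sqrt hQ
  have hun : 0 ≤ u := Real.sqrt_nonneg _
  have hvn : 0 ≤ v := Real.sqrt_nonneg _
  have hen : 0 ≤ e := Real.sqrt_nonneg _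
  have hfn : 0 ≤ f := Real.sqrt_nonneg _
  -- w ≤ e * f
  have hwef : w ≤ e * f := by
    have : w ≤ |w| := le_abs_self w
    have habs : |w| ≤ e * f := by
      have h1 : |w| = Real.sqrt (w ^ 2) := (Real.sqrt_sq_eq_abs w).symm
      rw [h1, ← Real.sqrt_mul hP]
      calc Real.sqrt (w ^ 2) ≤ Real.sqrt (P * Q) := Real.sqrt_le_sqrt hw
        _ = _ := by rw [Real.sqrt_mul hP]
    linarith
  -- (u*v + e*f)^2 ≤ (x₁*y₂) * (x₂*y₁)
  have hcs : (u * v + e * f) ^ 2 ≤ (x₁ * y₂) * (x₂ * y₁) := by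
    have h3 : (u * v + e * f) ^ 2 ≤ (u ^ 2 + e ^ 2) * (v ^ 2 + f ^ 2) := by
      nlinarith [sq_nonneg (u * f - v * e)]
    have h4 : (u ^ 2 + e ^ 2) * (v ^ 2 + f ^ 2) = (x₁ * y₂) * (x₂ * y₁) := by
      rw [hu2, hv2, he2, hf2]; ring
    linarith
  have hA : 0 < x₁ * y₂ := mul_pos hx₁ hy₂
  have hB : 0 < x₂ * y₁ := mul_pos hx₂ hy₁
  have huv : 0 ≤ u * v + e * f := by positivity
  have hkey : 2 * (u * v + e * f) ≤ x₁ * y₂ + x₂ * y₁ := by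
    nlinarith [sq_nonneg (x₁ * y₂ - x₂ * y₁), sq_nonneg (x₁ * y₂ + x₂ * y₁ - 2 * (u * v + e * f))]
  nlinarith

private lemma key (n : ℕ) (x₁ y₁ x₂ y₂ s t : ℝ) (z₁ z₂ : Fin n → ℝ)
    (hx₁ : 0 < x₁) (hy₁ : 0 < y₁) (hx₂ : 0 < x₂) (hy₂ : 0 < y₂)
    (hg₁ : 0 < x₁ * y₁ - ∑ i, (z₁ i) ^ 2) (hg₂ : 0 < x₂ * y₂ - ∑ i, (z₂ i) ^ 2)
    (hs : 0 ≤ s) (ht : 0 ≤ t) :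
    (s * Real.sqrt (x₁ * y₁ - ∑ i, (z₁ i) ^ 2) + t * Real.sqrt (x₂ * y₂ - ∑ i, (z₂ i) ^ 2)) ^ 2
      ≤ (s * x₁ + t * x₂) * (s * y₁ + t * y₂) - ∑ i, (s * z₁ i + t * z₂ i) ^ 2 := by
  set P := ∑ i, (z₁ i) ^ 2 with hP
  set Q := ∑ i, (z₂ i) ^ 2 with hQ
  set w := ∑ i, z₁ i * z₂ i with hw
  have hPn : 0 ≤ P := Finset.sum_nonneg fun i _ => sq_nonneg _
  have hQn : 0 ≤ Q := Finset.sum_nonneg fun i _ => sq_nonneg _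
  have hwle : w ^ 2 ≤ P * Q := Finset.sum_mul_sq_le_sq_mul_sq _ _ _
  have hsum : ∑ i, (s * z₁ i + t * z₂ i) ^ 2
      = s ^ 2 * P + 2 * s * t * w + t ^ 2 * Q := by
    rw [hP, hQ, hw, Finset.mul_sum, Finset.mul_sum, Finset.mul_sum, ← Finset.sum_add_distrib,
      ← Finset.sum_add_distrib]
    exact Finset.sum_congr rfl fun i _ => by ring
  set u := Real.sqrt (x₁ * y₁ - P) with hu
  set v := Real.sqrt (x₂ * y₂ - Q) with hv
  have hu2 : u ^ 2 = x₁ * y₁ - P := Real.sq_sqrt hg₁.le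
  have hv2 : v ^ 2 = x₂ * y₂ - Q := Real.sq_sqrt hg₂.le
  have hcore : 2 * (u * v) + 2 * w ≤ x₁ * y₂ + x₂ * y₁ :=
    core x₁ y₁ x₂ y₂ P Q w hx₁ hy₁ hx₂ hy₂ hPn hQn hwle hg₁ hg₂
  have hst : 0 ≤ s * t := mul_nonneg hs ht
  rw [hsum]
  nlinarith [mul_le_mul_of_nonneg_left hcore hst]

theorem log_quadratic_concave (n : ℕ) :
    ConcaveOn ℝ
      {p : ℝ × ℝ × (Fin n → ℝ) | 0 < p.1 ∧ 0 < p.2.1 ∧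
        0 < p.1 * p.2.1 - ∑ i, (p.2.2 i) ^ 2}
      (fun p => Real.log (p.1 * p.2.1 - ∑ i, (p.2.2 i) ^ 2)) := by
  have main : ∀ (p q : ℝ × ℝ × (Fin n → ℝ)),
      p ∈ {p : ℝ × ℝ × (Fin n → ℝ) | 0 < p.1 ∧ 0 < p.2.1 ∧
        0 < p.1 * p.2.1 - ∑ i, (p.2.2 i) ^ 2} →
      q ∈ {p : ℝ × ℝ × (Fin n → ℝ) | 0 < p.1 ∧ 0 < p.2.1 ∧
        0 < p.1 * p.2.1 - ∑ i, (p.2.2 i) ^ 2} →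
      ∀ s t : ℝ, 0 ≤ s → 0 ≤ t → s + t = 1 →
      0 < (s • p + t • q).1 ∧ 0 < (s • p + t • q).2.1 ∧
      (s * Real.sqrt (p.1 * p.2.1 - ∑ i, (p.2.2 i) ^ 2)
        + t * Real.sqrt (q.1 * q.2.1 - ∑ i, (q.2.2 i) ^ 2)) ^ 2
        ≤ (s • p + t • q).1 * (s • p + t • q).2.1 - ∑ i, ((s • p + t • q).2.2 i) ^ 2 := by
    intro p q hp hq s t hs ht hst
    obtain ⟨hx₁, hy₁, hg₁⟩ := hp
    obtain ⟨hx₂, hy₂, hg₂⟩ := hq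
    refine ⟨comb_pos hx₁ hx₂ hs ht hst, comb_pos hy₁ hy₂ hs ht hst, ?_⟩
    have := key n p.1 p.2.1 q.1 q.2.1 s t p.2.2 q.2.2 hx₁ hy₁ hx₂ hy₂ hg₁ hg₂ hs ht
    simpa [Prod.smul_def, smul_eq_mul] using this
  constructor
  · intro p hp q hq s t hs ht hst
    obtain ⟨h1, h2, h3⟩ := main p q hp hq s t hs ht hst
    refine ⟨h1, h2, lt_of_lt_of_le ?_ h3⟩
    obtain ⟨hx₁, hy₁, hg₁⟩ := hp
    obtain ⟨hx₂, hy₂, hg₂⟩ := hq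
    have := comb_pos (Real.sqrt_pos.2 hg₁) (Real.sqrt_pos.2 hg₂) hs ht hst
    positivity
  · intro p hp q hq s t hs ht hst
    obtain ⟨h1, h2, h3⟩ := main p q hp hq s t hs ht hst
    obtain ⟨hx₁, hy₁, hg₁⟩ := hp
    obtain ⟨hx₂, hy₂, hg₂⟩ := hq
    set u := Real.sqrt (p.1 * p.2.1 - ∑ i, (p.2.2 i) ^ 2) with hu
    set v := Real.sqrt (q.1 * q.2.1 - ∑ i, (q.2.2 i) ^ 2) with hv
    have hup : 0 < u := Real.sqrt_pos.2 hg₁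
    have hvp : 0 < v := Real.sqrt_pos.2 hg₂
    have hcomb : 0 < s * u + t * v := comb_pos hup hvp hs ht hst
    have hlog1 : s • Real.log u + t • Real.log v ≤ Real.log (s • u + t • v) :=
      strictConcaveOn_log_Ioi.concaveOn.2 hup hvp hs ht hst
    have hmono : Real.log ((s * u + t * v) ^ 2)
        ≤ Real.log ((s • p + t • q).1 * (s • p + t • q).2.1
            - ∑ i, ((s • p + t • q).2.2 i) ^ 2) :=
      Real.log_le_log (by positivity) h3
    have hsq : Real.log ((s * u + t * v) ^ 2) = 2 * Real.log (s * u + t * v) := by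
      rw [Real.log_pow]; norm_num
    have hlu : Real.log u = Real.log (p.1 * p.2.1 - ∑ i, (p.2.2 i) ^ 2) / 2 := by
      rw [hu, Real.log_sqrt hg₁.le]
    have hlv : Real.log v = Real.log (q.1 * q.2.1 - ∑ i, (q.2.2 i) ^ 2) / 2 := by
      rw [hv, Real.log_sqrt hg₂.le]
    simp only [smul_eq_mul] at hlog1 ⊢
    rw [hlu, hlv] at hlog1
    linarith
end

section
/- Define Q(x, y, z) = xy - Σᵢ zᵢ² for x, y ∈ ℝ and z ∈ ℝⁿ. If (x₁, y₁, z₁) and (x₂, y₂, z₂) satisfy x₁ > 0, x₂ > 0, Q(x₁,y₁,z₁) = Q(x₂,y₂,z₂) > 0, then for every s ∈ [0,1], Q(s·(x₁,y₁,z₁) + (1-s)·(x₂,y₂,z₂)) ≥ Q(x₁,y₁,z₁). -/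
/-!
Write `B` for the polar form of `Q`, so that `Q (s v + t w) = s² Q v + s t B(v, w) + t² Q w`.
Expanding shows `x₁ x₂ B(v, w) = x₂² Q v + x₁² Q w + |x₁ z₂ - x₂ z₁|²`, a reverse Cauchy–Schwarz
inequality for the Lorentzian form `Q`. If `Q v = Q w = c ≥ 0` and `x₁, x₂ > 0` this gives
`x₁ x₂ B ≥ (x₁² + x₂²) c ≥ 2 x₁ x₂ c`, i.e. `B ≥ 2c`, and then for `s + t = 1`, `s, t ≥ 0`,
`Q (s v + t w) ≥ (s² + 2 s t + t²) c = c`.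
-/

variable {ι : Type*} [Fintype ι]

def lorentzQuad (x y : ℝ) (z : ι → ℝ) : ℝ := x * y - z ⬝ᵥ z

def lorentzPolar (x₁ y₁ : ℝ) (z₁ : ι → ℝ) (x₂ y₂ : ℝ) (z₂ : ι → ℝ) : ℝ :=
  x₁ * y₂ + x₂ * y₁ - 2 * (z₁ ⬝ᵥ z₂)

theorem lorentzQuad_add (x₁ y₁ x₂ y₂ s t : ℝ) (z₁ z₂ : ι → ℝ) :
    lorentzQuad (s * x₁ + t * x₂) (s * y₁ + t * y₂) (s • z₁ + t • z₂) =
      s ^ 2 * lorentzQuad x₁ y₁ z₁ + s * t * lorentzPolar x₁ y₁ z₁ x₂ y₂ z₂ +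
        t ^ 2 * lorentzQuad x₂ y₂ z₂ := by
  simp only [lorentzQuad, lorentzPolar, add_dotProduct, dotProduct_add, smul_dotProduct,
    dotProduct_smul, smul_eq_mul, dotProduct_comm z₂ z₁]
  ring

theorem mul_lorentzPolar (x₁ y₁ x₂ y₂ : ℝ) (z₁ z₂ : ι → ℝ) :
    x₁ * x₂ * lorentzPolar x₁ y₁ z₁ x₂ y₂ z₂ =
      x₂ ^ 2 * lorentzQuad x₁ y₁ z₁ + x₁ ^ 2 * lorentzQuad x₂ y₂ z₂ +
        (x₁ • z₂ - x₂ • z₁) ⬝ᵥ (x₁ • z₂ - x₂ • z₁) := by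
  simp only [lorentzQuad, lorentzPolar, sub_dotProduct, dotProduct_sub, smul_dotProduct,
    dotProduct_smul, smul_eq_mul, dotProduct_comm z₂ z₁]
  ring

theorem two_mul_le_lorentzPolar {x₁ y₁ x₂ y₂ c : ℝ} {z₁ z₂ : ι → ℝ}
    (hx₁ : 0 < x₁) (hx₂ : 0 < x₂) (hc : 0 ≤ c)
    (h₁ : lorentzQuad x₁ y₁ z₁ = c) (h₂ : lorentzQuad x₂ y₂ z₂ = c) :
    2 * c ≤ lorentzPolar x₁ y₁ z₁ x₂ y₂ z₂ := by
  have hsq : 0 ≤ (x₁ • z₂ - x₂ • z₁) ⬝ᵥ (x₁ • z₂ - x₂ • z₁) := by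
    simpa using dotProduct_star_self_nonneg (x₁ • z₂ - x₂ • z₁)
  have hamgm : 2 * x₁ * x₂ * c ≤ (x₁ ^ 2 + x₂ ^ 2) * c :=
    mul_le_mul_of_nonneg_right (two_mul_le_add_sq x₁ x₂) hc
  have key := mul_lorentzPolar x₁ y₁ x₂ y₂ z₁ z₂
  rw [h₁, h₂] at key
  refine le_of_mul_le_mul_left ?_ (mul_pos hx₁ hx₂)
  linarith

theorem le_lorentzQuad_convex_combination {x₁ y₁ x₂ y₂ c s t : ℝ} {z₁ z₂ : ι → ℝ}
    (hx₁ : 0 < x₁) (hx₂ : 0 < x₂) (hc : 0 ≤ c)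
    (h₁ : lorentzQuad x₁ y₁ z₁ = c) (h₂ : lorentzQuad x₂ y₂ z₂ = c)
    (hs : 0 ≤ s) (ht : 0 ≤ t) (hst : s + t = 1) :
    c ≤ lorentzQuad (s * x₁ + t * x₂) (s * y₁ + t * y₂) (s • z₁ + t • z₂) := by
  have hB := two_mul_le_lorentzPolar hx₁ hx₂ hc h₁ h₂
  rw [lorentzQuad_add, h₁, h₂]
  calc c = (s + t) ^ 2 * c := by rw [hst, one_pow, one_mul]
    _ = s ^ 2 * c + s * t * (2 * c) + t ^ 2 * c := by ring
    _ ≤ _ := by gcongr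

theorem Q_superlevel_convex (n : ℕ)
    (Q : ℝ → ℝ → (Fin n → ℝ) → ℝ)
    (hQ : ∀ x y z, Q x y z = x * y - ∑ i, (z i) ^ 2)
    (x₁ y₁ x₂ y₂ : ℝ) (z₁ z₂ : Fin n → ℝ)
    (hx₁ : 0 < x₁) (hx₂ : 0 < x₂)
    (heq : Q x₁ y₁ z₁ = Q x₂ y₂ z₂)
    (hpos : 0 < Q x₁ y₁ z₁)
    (s : ℝ) (hs : s ∈ Set.Icc (0 : ℝ) 1) :
    Q x₁ y₁ z₁ ≤
      Q (s * x₁ + (1 - s) * x₂) (s * y₁ + (1 - s) * y₂)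
        (fun i => s * z₁ i + (1 - s) * z₂ i) := by
  have hQ' : Q = lorentzQuad := by
    ext x y z
    simp only [hQ, lorentzQuad, dotProduct, sq]
  subst hQ'
  exact le_lorentzQuad_convex_combination hx₁ hx₂ hpos.le rfl heq.symm hs.1 (sub_nonneg.2 hs.2)
    (add_sub_cancel s 1)
end

section
/- Define Q(x, y, z) = xy - Σᵢ zᵢ² for x, y ∈ ℝ and z ∈ ℝⁿ. If (x₁, y₁, z₁) and (x₂, y₂, z₂) satisfy x₁ > 0, x₂ > 0, Q(x₁,y₁,z₁) = Q(x₂,y₂,z₂) > 0, then Q(x₁-x₂, y₁-y₂, z₁-z₂) ≤ 0, with equality if and only if (x₁,y₁,z₁) = (x₂,y₂,z₂). -/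
theorem Q_difference_nonpos (n : ℕ)
    (Q : ℝ → ℝ → (Fin n → ℝ) → ℝ)
    (hQ : ∀ x y z, Q x y z = x * y - ∑ i, (z i) ^ 2)
    (x₁ y₁ x₂ y₂ : ℝ) (z₁ z₂ : Fin n → ℝ)
    (hx₁ : 0 < x₁) (hx₂ : 0 < x₂)
    (heq : Q x₁ y₁ z₁ = Q x₂ y₂ z₂)
    (hpos : 0 < Q x₁ y₁ z₁) :
    Q (x₁ - x₂) (y₁ - y₂) (z₁ - z₂) ≤ 0 ∧
      (Q (x₁ - x₂) (y₁ - y₂) (z₁ - z₂) = 0 ↔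
        x₁ = x₂ ∧ y₁ = y₂ ∧ z₁ = z₂) := by
  simp only [hQ, Pi.sub_apply] at heq hpos ⊢
  set S1 := ∑ i, (z₁ i) ^ 2 with hS1
  set S2 := ∑ i, (z₂ i) ^ 2 with hS2
  set P := ∑ i, z₁ i * z₂ i with hP
  have h2 : ∑ i, (z₁ i - z₂ i) ^ 2 = S1 + S2 - 2 * P := by
    rw [hS1, hS2, hP, Finset.mul_sum, ← Finset.sum_add_distrib,
      ← Finset.sum_sub_distrib]
    exact Finset.sum_congr rfl fun i _ => by ring
  set K := ∑ i, (x₁ * z₂ i - x₂ * z₁ i) ^ 2 with hKdef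
  have hK : 0 ≤ K := Finset.sum_nonneg fun i _ => sq_nonneg _
  have h1 : K = x₁ ^ 2 * S2 + x₂ ^ 2 * S1 - 2 * x₁ * x₂ * P := by
    rw [hKdef, hS1, hS2, hP, Finset.mul_sum, Finset.mul_sum, Finset.mul_sum,
      ← Finset.sum_add_distrib, ← Finset.sum_sub_distrib]
    exact Finset.sum_congr rfl fun i _ => by ring
  have hid : x₁ * x₂ * ((x₁ - x₂) * (y₁ - y₂) - (S1 + S2 - 2 * P)) =
      -(x₁ * y₁ - S1) * (x₁ - x₂) ^ 2 - K := by
    rw [h1]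
    linear_combination (x₁ ^ 2 - x₁ * x₂) * heq
  rw [h2]
  have hxx : 0 < x₁ * x₂ := mul_pos hx₁ hx₂
  constructor
  · nlinarith [sq_nonneg (x₁ - x₂)]
  constructor
  · intro h0
    rw [h0, mul_zero] at hid
    have hx : x₁ = x₂ := by
      have : (x₁ - x₂) ^ 2 ≤ 0 := by nlinarith
      have := le_antisymm this (sq_nonneg _)
      nlinarith [this]
    have hK0 : K = 0 := by nlinarith [sq_nonneg (x₁ - x₂)]
    have hz : z₁ = z₂ := by
      funext i
      have hall := (Finset.sum_eq_zero_iff_of_nonneg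
        (fun i _ => sq_nonneg (x₁ * z₂ i - x₂ * z₁ i))).mp hK0 i (Finset.mem_univ i)
      have : x₁ * z₂ i - x₂ * z₁ i = 0 := by
        exact pow_eq_zero_iff (by norm_num) |>.mp hall
      have hx1 : x₁ ≠ 0 := ne_of_gt hx₁
      rw [← hx] at this
      have : x₁ * z₁ i = x₁ * z₂ i := by linarith
      exact mul_left_cancel₀ hx1 this
    have hS : S1 = S2 := by rw [hS1, hS2, hz]
    have hy : y₁ = y₂ := by
      rw [← hx, hS] at heq
      have : x₁ * y₁ = x₁ * y₂ := by linarith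
      exact mul_left_cancel₀ (ne_of_gt hx₁) this
    exact ⟨hx, hy, hz⟩
  · rintro ⟨hx, hy, hz⟩
    have hS : S1 = S2 := by rw [hS1, hS2, hz]
    have hPS : P = S2 := by
      rw [hP, hS2, hz]; exact Finset.sum_congr rfl fun i _ => sq (z₂ i) ▸ by ring
    rw [hx, hy]
    ring_nf
    linarith
end
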